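/- arXiv:1801.07024 — 2 statements merged into one kernel-verified Lean document; each statement's English description precedes it below -/
import Mathlib

section
/- Let R > 0, θ₀ ∈ (0,1), and let v₀ ∈ H¹₀(−R,R) with 0 ≤ v₀ ≤ 1 satisfy E_{R,θ₀}(v₀) < 0, where E_{R,θ₀}(φ) = (1/2)∫_{−R}^{R} |φ'(x)|² dx − ∫_{−R}^{R} F(θ₀,φ(x)) dx and F(θ₀,v) = −v⁴/4 + (1+θ₀)v³/3 − θ₀v²/2. Let v be the classical solution of the Dirichlet problem ∂v/∂t = ∂²v/∂x² + v(v − θ₀)(1 − v) on (0,∞) × (−R,R), v(t,±R) = 0, with initial data v₀, satisfying 0 ≤ v ≤ 1 and E_{R,θ₀}(v(t,·)) → E_{R,θ₀}(v₀) as t → 0⁺, and along which the energy is nonincreasing in t. Then the solution does not go to extinction: limsup_{t→+∞} sup_{x∈[−R,R]} v(t,x) > 0. -/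
/-- The antiderivative `F(θ,v) = ∫₀^v s(s−θ)(1−s) ds = −v⁴/4 + (1+θ)v³/3 − θv²/2`
of the bistable nonlinearity `f(θ,u) = u(u−θ)(1−u)`. -/
noncomputable def Fpot (θ v : ℝ) : ℝ := -v ^ 4 / 4 + (1 + θ) * v ^ 3 / 3 - θ * v ^ 2 / 2

/-- The energy functional `E_{R,θ}(φ) = (1/2)∫_{−R}^R |φ'|² − ∫_{−R}^R F(θ,φ)`. -/
noncomputable def energy (R θ : ℝ) (φ : ℝ → ℝ) : ℝ :=
  (1 / 2) * ∫ x in Set.Ioo (-R) R, (deriv φ x) ^ 2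
    - ∫ x in Set.Ioo (-R) R, Fpot θ (φ x)

set_option maxHeartbeats 1000000 in
/-- **Negative initial energy prevents extinction.** If `v₀ ∈ H¹₀(−R,R)`,
`0 ≤ v₀ ≤ 1`, has negative energy `E_{R,θ₀}(v₀) < 0`, then the solution `v` of
the Dirichlet problem `∂v/∂t = ∂²v/∂x² + v(v − θ₀)(1 − v)` on `(0,∞) × (−R,R)`,
`v(t,±R) = 0`, starting from `v₀`, along which the energy is nonincreasing and
converges to `E_{R,θ₀}(v₀)` as `t → 0⁺`, satisfies
`limsup_{t→∞} sup_{x∈[−R,R]} v(t,x) > 0`. -/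
theorem negative_energy_no_extinction
    (R θ₀ : ℝ) (hR : 0 < R) (hθ₀ : θ₀ ∈ Set.Ioo (0 : ℝ) 1)
    (v₀ : ℝ → ℝ)
    -- `v₀ ∈ H¹₀(−R,R)` (a continuous representative vanishing outside `(−R,R)`)
    (hv₀_cont : Continuous v₀)
    (hv₀_supp : ∀ x, x ∉ Set.Ioo (-R) R → v₀ x = 0)
    (hv₀_mem : ∀ x, 0 ≤ v₀ x ∧ v₀ x ≤ 1)
    -- negative initial energy
    (hE₀ : energy R θ₀ v₀ < 0)
    (v : ℝ → ℝ → ℝ)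
    -- classical solution: regularity on `(0,∞) × [−R,R]`
    (hv_smooth : ContDiffOn ℝ (⊤ : ℕ∞) (fun p : ℝ × ℝ => v p.1 p.2)
      (Set.Ioi 0 ×ˢ Set.Icc (-R) R))
    -- the equation holds pointwise in `(0,∞) × (−R,R)`
    (hv_pde : ∀ t > (0 : ℝ), ∀ x ∈ Set.Ioo (-R) R,
      deriv (fun s => v s x) t
        = deriv (deriv (v t)) x + v t x * (v t x - θ₀) * (1 - v t x))
    -- Dirichlet boundary conditions
    (hv_bc : ∀ t > (0 : ℝ), v t (-R) = 0 ∧ v t R = 0)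
    -- initial data
    (hv_init : ∀ x, v 0 x = v₀ x)
    -- bounds
    (hv_bdd : ∀ t > (0 : ℝ), ∀ x ∈ Set.Icc (-R) R, 0 ≤ v t x ∧ v t x ≤ 1)
    -- the energy converges to the initial energy as `t → 0⁺`
    (hE_init : Filter.Tendsto (fun t => energy R θ₀ (v t))
      (nhdsWithin 0 (Set.Ioi 0)) (nhds (energy R θ₀ v₀)))
    -- the energy is nonincreasing along the solution
    (hE_mono : ∀ s t : ℝ, 0 < s → s ≤ t → energy R θ₀ (v t) ≤ energy R θ₀ (v s)) :
    0 < Filter.limsup (fun t => sSup (v t '' Set.Icc (-R) R)) Filter.atTop := by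
  obtain ⟨hθ0, hθ1⟩ := hθ₀
  set ε := -energy R θ₀ v₀ with hεdef
  have hεpos : 0 < ε := by simp only [hεdef]; linarith
  have hEt : ∀ t, 0 < t → energy R θ₀ (v t) ≤ energy R θ₀ v₀ := by
    intro t ht
    refine ge_of_tendsto hE_init ?_
    filter_upwards [Ioo_mem_nhdsGT_of_mem ⟨le_refl (0:ℝ), ht⟩] with s hs
    exact hE_mono s t hs.1 hs.2.le
  have hvol : MeasureTheory.volume (Set.Ioo (-R) R) < ⊤ := by
    simp [Real.volume_Ioo]
  have hvolval : (MeasureTheory.volume (Set.Ioo (-R) R)).toReal = 2 * R := by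
    rw [Real.volume_Ioo, ENNReal.toReal_ofReal (by linarith)]
    ring
  have key : ∀ t, 0 < t → ε / (4 * R ^ 2) ≤ sSup (v t '' Set.Icc (-R) R) := by
    intro t ht
    set M := sSup (v t '' Set.Icc (-R) R) with hM
    have hbdd' : BddAbove (v t '' Set.Icc (-R) R) := by
      refine ⟨1, ?_⟩
      rintro y ⟨x, hx, rfl⟩
      exact (hv_bdd t ht x hx).2
    have hMub : ∀ x ∈ Set.Icc (-R) R, v t x ≤ M := fun x hx =>
      le_csSup hbdd' (Set.mem_image_of_mem _ hx)
    have h0mem : (0:ℝ) ∈ Set.Icc (-R) R := ⟨by linarith, hR.le⟩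
    have hM0 : 0 ≤ M := le_trans (hv_bdd t ht 0 h0mem).1 (hMub 0 h0mem)
    have hct : ContinuousOn (fun x => v t x) (Set.Icc (-R) R) := by
      have h1 : ContinuousOn (fun p : ℝ × ℝ => v p.1 p.2)
          (Set.Ioi 0 ×ˢ Set.Icc (-R) R) := hv_smooth.continuousOn
      have h2 : Continuous (fun x : ℝ => ((t, x) : ℝ × ℝ)) :=
        continuous_const.prodMk continuous_id
      exact h1.comp h2.continuousOn (fun x hx => ⟨ht, hx⟩)
    have hA : (0:ℝ) ≤ ∫ x in Set.Ioo (-R) R, (deriv (v t) x) ^ 2 :=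
      MeasureTheory.setIntegral_nonneg measurableSet_Ioo (fun x _ => sq_nonneg _)
    set B := ∫ x in Set.Ioo (-R) R, Fpot θ₀ (v t x) with hBdef
    have hB : ε / R ≤ B := by
      have h := hEt t ht
      have h3 : energy R θ₀ (v t)
          = 1 / 2 * ∫ x in Set.Ioo (-R) R, ((deriv (v t) x) ^ 2 - B) := by
        unfold energy
        rw [hBdef]
      by_cases hint :
          MeasureTheory.IntegrableOn (fun x => (deriv (v t) x) ^ 2) (Set.Ioo (-R) R)
      · have hconst : MeasureTheory.IntegrableOn (fun _ : ℝ => B) (Set.Ioo (-R) R) :=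
          MeasureTheory.integrableOn_const hvol.ne
        have hsplit : ∫ x in Set.Ioo (-R) R, ((deriv (v t) x) ^ 2 - B)
            = (∫ x in Set.Ioo (-R) R, (deriv (v t) x) ^ 2) - B * (2 * R) := by
          rw [MeasureTheory.integral_sub hint hconst,
            MeasureTheory.setIntegral_const, smul_eq_mul, MeasureTheory.measureReal_def, hvolval]
          ring
        rw [h3, hsplit] at h
        rw [div_le_iff₀ hR]
        nlinarith [hA, hεdef, h]
      · have hconst : MeasureTheory.IntegrableOn (fun _ : ℝ => B) (Set.Ioo (-R) R) :=
          MeasureTheory.integrableOn_const hvol.ne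
        have hnint : ¬ MeasureTheory.IntegrableOn
            (fun x => (deriv (v t) x) ^ 2 - B) (Set.Ioo (-R) R) := by
          intro hI
          apply hint
          have h4 : MeasureTheory.IntegrableOn
              (fun x => ((deriv (v t) x) ^ 2 - B) + B) (Set.Ioo (-R) R) := hI.add hconst
          simpa using h4
        rw [h3, MeasureTheory.integral_undef hnint] at h
        exfalso
        simp only [mul_zero] at h
        linarith [hεpos, hεdef, h]
    have hεB : ε ≤ B * R := by
      have h5 := (div_le_iff₀ hR).mp hB
      linarith
    have hnorm : ‖B‖ ≤ 2 * M * (MeasureTheory.volume (Set.Ioo (-R) R)).toReal := by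
      refine MeasureTheory.norm_setIntegral_le_of_norm_le_const hvol ?_
      intro x hx
      have hx' : x ∈ Set.Icc (-R) R := Set.Ioo_subset_Icc_self hx
      obtain ⟨hy0, hy1⟩ := hv_bdd t ht x hx'
      have hyM : v t x ≤ M := hMub x hx'
      have hy2 : (0:ℝ) ≤ v t x ^ 2 := sq_nonneg _
      have hy3' : (0:ℝ) ≤ v t x ^ 3 := by positivity
      have hy4 : (0:ℝ) ≤ v t x ^ 4 := by positivity
      have hy3 : v t x ^ 3 ≤ v t x := by nlinarith
      have hy4' : v t x ^ 4 ≤ v t x := by nlinarith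
      have hθ3 : θ₀ * v t x ^ 3 ≤ v t x ^ 3 := by nlinarith
      have hθ3' : (0:ℝ) ≤ θ₀ * v t x ^ 3 := by positivity
      have hθ2 : (0:ℝ) ≤ θ₀ * v t x ^ 2 := by positivity
      have hθ2' : θ₀ * v t x ^ 2 ≤ v t x := by nlinarith
      rw [Real.norm_eq_abs, abs_le]
      constructor
      · unfold Fpot; linarith
      · unfold Fpot; linarith
    have hBle : B ≤ 2 * M * (2 * R) := by
      calc B ≤ ‖B‖ := le_abs_self _
        _ ≤ 2 * M * (MeasureTheory.volume (Set.Ioo (-R) R)).toReal := hnorm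
        _ = 2 * M * (2 * R) := by rw [hvolval]
    rw [div_le_iff₀ (by positivity : (0:ℝ) < 4 * R ^ 2)]
    nlinarith [hεB, hBle, hR]
  have hev : ∀ᶠ t in Filter.atTop, ε / (4 * R ^ 2) ≤ sSup (v t '' Set.Icc (-R) R) :=
    Filter.eventually_atTop.2 ⟨1, fun t ht => key t (lt_of_lt_of_le one_pos ht)⟩
  have hbdd : Filter.IsBoundedUnder (· ≤ ·) Filter.atTop
      (fun t => sSup (v t '' Set.Icc (-R) R)) := by
    refine ⟨1, Filter.eventually_map.2 (Filter.eventually_atTop.2 ⟨1, fun t ht => ?_⟩)⟩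
    have ht' : (0:ℝ) < t := lt_of_lt_of_le one_pos ht
    refine csSup_le ⟨v t 0, Set.mem_image_of_mem _ ⟨by linarith, hR.le⟩⟩ ?_
    rintro y ⟨x, hx, rfl⟩
    exact (hv_bdd t ht' x hx).2
  have hle : ε / (4 * R ^ 2) ≤ Filter.limsup (fun t => sSup (v t '' Set.Icc (-R) R))
      Filter.atTop := Filter.le_limsup_of_frequently_le hev.frequently hbdd
  have hpos : (0:ℝ) < ε / (4 * R ^ 2) := by positivity
  linarith
end

section
/- Let ε > 0, a₀ ∈ (0,1), and let (u,a) be a classical solution of the system ∂u/∂t = ∂²u/∂x² + u(u − a²)(1 − u), ∂a/∂t = ∂²a/∂x² + 2(∂a/∂x)(∂ln u/∂x) − ε(1 − u)a on (0,∞) × ℝ with continuous bounded initial data u(0,·) = u₀ satisfying inf u₀ > 0, u₀ ≤ 1, a(0,·) ≡ a₀, and with 0 < u ≤ 1, 0 < a ≤ a₀ throughout. Then there exist constants M > 0 and N > 0 (depending only on ε and a₀) such that a₀ e^{−(M+N)t} ≤ a(t,x) ≤ a₀ e^{(M+N)t} for all t ≥ 0 and x ∈ ℝ. -/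
open Filter Set Topology

/-- Second derivative is nonneg at a global minimum of a `C²` function. -/
lemma aux_second_deriv_nonneg {f : ℝ → ℝ} {x₀ : ℝ} (hf : ContDiff ℝ 2 f)
    (hmin : ∀ y, f x₀ ≤ f y) : 0 ≤ deriv (deriv f) x₀ := by
  by_contra hneg
  push_neg at hneg
  have hf2 : ContDiff ℝ (1 + 1) f := by norm_num; exact hf
  obtain ⟨hdiff, -, hd1⟩ := contDiff_succ_iff_deriv.mp hf2
  have hddiff : Differentiable ℝ (deriv f) := hd1.differentiable one_ne_zero
  have h0 : deriv f x₀ = 0 :=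
    (IsLocalMin.deriv_eq_zero (Filter.Eventually.of_forall hmin))
  have hslope : Tendsto (slope (deriv f) x₀) (𝓝[≠] x₀) (𝓝 (deriv (deriv f) x₀)) :=
    hasDerivAt_iff_tendsto_slope.mp (hddiff x₀).hasDerivAt
  have hev : ∀ᶠ y in 𝓝[>] x₀, slope (deriv f) x₀ y < 0 :=
    (hslope.mono_left (nhdsWithin_mono _ fun y hy => ne_of_gt hy)).eventually_lt_const hneg
  have hev2 : ∀ᶠ y in 𝓝[>] x₀, deriv f y < 0 := by
    filter_upwards [hev, self_mem_nhdsWithin] with y hy hy'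
    have hy'' : (0:ℝ) < y - x₀ := sub_pos.mpr hy'
    rw [slope_def_field, h0, sub_zero] at hy
    rcases div_neg_iff.mp hy with ⟨-, h2⟩ | ⟨h1, -⟩
    · linarith
    · exact h1
  obtain ⟨b, hb, hb2⟩ := mem_nhdsGT_iff_exists_Ioo_subset.mp hev2
  have hanti : StrictAntiOn f (Icc x₀ b) := by
    apply strictAntiOn_of_deriv_neg (convex_Icc _ _) (hf.continuous.continuousOn)
    intro y hy
    rw [interior_Icc] at hy
    exact hb2 hy
  have hb' : x₀ < b := hb
  have hmid : x₀ < (x₀ + b) / 2 := by linarith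
  have hmid2 : (x₀ + b) / 2 ∈ Icc x₀ b := ⟨by linarith, by linarith⟩
  have := hanti (left_mem_Icc.mpr hb'.le) hmid2 hmid
  exact absurd (hmin ((x₀ + b) / 2)) (not_le.mpr this)

/-- Left-sided minimality gives nonpositive derivative. -/
lemma aux_deriv_nonpos {φ : ℝ → ℝ} {t₀ d : ℝ} (ht₀ : 0 < t₀)
    (hd : HasDerivAt φ d t₀) (hmin : ∀ s ∈ Set.Icc (0:ℝ) t₀, φ t₀ ≤ φ s) : d ≤ 0 := by
  have hs := hasDerivAt_iff_tendsto_slope.mp hd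
  have h1 : Tendsto (slope φ t₀) (𝓝[<] t₀) (𝓝 d) :=
    hs.mono_left (nhdsWithin_mono _ fun y hy => ne_of_lt hy)
  refine le_of_tendsto h1 ?_
  have hIoo : Set.Ioo (0:ℝ) t₀ ∈ 𝓝[<] t₀ := Ioo_mem_nhdsLT_of_mem ⟨ht₀, le_rfl⟩
  filter_upwards [hIoo] with s hs'
  rw [slope_def_field]
  apply div_nonpos_of_nonneg_of_nonpos
  · exact sub_nonneg.mpr (hmin s ⟨hs'.1.le, hs'.2.le⟩)
  · linarith [hs'.2]

set_option maxHeartbeats 1000000 in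
/-- **Exponential sandwich for the Allee trait.** If `(u,a)` is a classical
solution of the system `∂u/∂t = ∂²u/∂x² + u(u − a²)(1 − u)`,
`∂a/∂t = ∂²a/∂x² + 2 ∂ₓa ∂ₓ(ln u) − ε(1 − u)a` on `(0,∞) × ℝ` with continuous
bounded initial data `u(0,·) = u₀` satisfying `inf u₀ > 0`, `u₀ ≤ 1`,
`a(0,·) ≡ a₀`, and `0 < u ≤ 1`, `0 < a ≤ a₀`, then there exist `M > 0` and
`N > 0` such that `a₀ e^{−(M+N)t} ≤ a(t,x) ≤ a₀ e^{(M+N)t}` for all `t ≥ 0`. -/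
theorem allee_trait_sandwich
    (ε : ℝ) (hε : 0 < ε)
    (a₀ : ℝ) (ha₀ : a₀ ∈ Set.Ioo (0 : ℝ) 1)
    (u₀ : ℝ → ℝ) (hu₀_cont : Continuous u₀)
    (hu₀_pos : ∃ δ > (0 : ℝ), ∀ x, δ ≤ u₀ x)
    (hu₀_le : ∀ x, u₀ x ≤ 1)
    (u a : ℝ → ℝ → ℝ)
    -- continuity up to `t = 0` and initial data
    (hu_cont : ContinuousOn (fun p : ℝ × ℝ => u p.1 p.2) (Set.Ici 0 ×ˢ Set.univ))
    (ha_cont : ContinuousOn (fun p : ℝ × ℝ => a p.1 p.2) (Set.Ici 0 ×ˢ Set.univ))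
    (hu_init : ∀ x, u 0 x = u₀ x)
    (ha_init : ∀ x, a 0 x = a₀)
    -- `C^{1,2}` regularity on `(0,∞) × ℝ`
    (hu_reg_t : ∀ x, DifferentiableOn ℝ (fun s => u s x) (Set.Ioi 0))
    (hu_reg_x : ∀ t > (0 : ℝ), ContDiff ℝ 2 (u t))
    (ha_reg_t : ∀ x, DifferentiableOn ℝ (fun s => a s x) (Set.Ioi 0))
    (ha_reg_x : ∀ t > (0 : ℝ), ContDiff ℝ 2 (a t))
    -- bounds `0 < u ≤ 1`, `0 < a ≤ a₀`
    (hu_bdd : ∀ t > (0 : ℝ), ∀ x, 0 < u t x ∧ u t x ≤ 1)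
    (ha_bdd : ∀ t > (0 : ℝ), ∀ x, 0 < a t x ∧ a t x ≤ a₀)
    -- the equations hold pointwise
    (hu_pde : ∀ t > (0 : ℝ), ∀ x,
      deriv (fun s => u s x) t
        = deriv (deriv (u t)) x + u t x * (u t x - (a t x) ^ 2) * (1 - u t x))
    (ha_pde : ∀ t > (0 : ℝ), ∀ x,
      deriv (fun s => a s x) t
        = deriv (deriv (a t)) x
          + 2 * deriv (a t) x * deriv (fun y => Real.log (u t y)) x
          - ε * (1 - u t x) * a t x) :
    ∃ M > (0 : ℝ), ∃ N > (0 : ℝ), ∀ t ≥ (0 : ℝ), ∀ x : ℝ,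
      a₀ * Real.exp (-(M + N) * t) ≤ a t x ∧
      a t x ≤ a₀ * Real.exp ((M + N) * t) := by
  obtain ⟨ha₀p, ha₀1⟩ := ha₀
  -- ### The key lower bound via a parabolic minimum principle
  have key : ∀ T > (0:ℝ), ∀ xT, a₀ * Real.exp (-(2*ε+4) * T) ≤ a T xT := by
    intro T hT xT
    have hTnn : (0:ℝ) ≤ T := hT.le
    -- lower bound for the auxiliary quantity W s y
    have hWlb : ∀ s, 0 ≤ s → ∀ y,
        -a₀ ≤ (a s y - a₀ * Real.exp (-(2*ε+4)*s)) * u s y * Real.exp (-(ε+1)*s) := by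
      intro s hs y
      rcases eq_or_lt_of_le hs with h0 | hpos
      · rw [← h0]
        simp only [mul_zero, Real.exp_zero, mul_one, ha_init y]
        rw [sub_self, zero_mul]
        linarith
      · obtain ⟨hap, haa⟩ := ha_bdd s hpos y
        obtain ⟨hup, hua⟩ := hu_bdd s hpos y
        have hC1 : Real.exp (-(2*ε+4)*s) ≤ 1 := Real.exp_le_one_iff.mpr (by nlinarith)
        have hC0 : 0 < Real.exp (-(2*ε+4)*s) := Real.exp_pos _
        have hE1 : Real.exp (-(ε+1)*s) ≤ 1 := Real.exp_le_one_iff.mpr (by nlinarith)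
        have hE0 : 0 < Real.exp (-(ε+1)*s) := Real.exp_pos _
        have hCuE : Real.exp (-(2*ε+4)*s) * u s y * Real.exp (-(ε+1)*s) ≤ 1 :=
          mul_le_one₀ (mul_le_one₀ hC1 hup.le hua) hE0.le hE1
        have h2 : a₀ * (Real.exp (-(2*ε+4)*s) * u s y * Real.exp (-(ε+1)*s)) ≤ a₀ * 1 :=
          mul_le_mul_of_nonneg_left hCuE ha₀p.le
        have h3 : 0 < a s y * u s y * Real.exp (-(ε+1)*s) :=
          mul_pos (mul_pos hap hup) hE0
        nlinarith [h2, h3]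
    -- the barrier claim
    have main : ∀ η > (0:ℝ),
        0 ≤ (a T xT - a₀ * Real.exp (-(2*ε+4)*T)) * u T xT * Real.exp (-(ε+1)*T)
            + η * Real.exp (3*T) * (1 + xT^2) := by
      intro η hη
      by_contra hbad
      push_neg at hbad
      set R := Real.sqrt (a₀ / η) with hR
      have hRnn : 0 ≤ R := Real.sqrt_nonneg _
      have hR2 : R^2 = a₀ / η := Real.sq_sqrt (by positivity)
      have hRpos : 0 < R := Real.sqrt_pos.mpr (by positivity)
      have hKsub : Set.Icc (0:ℝ) T ×ˢ Set.Icc (-R) R ⊆ Set.Ici 0 ×ˢ (Set.univ : Set ℝ) :=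
        fun p hp => ⟨hp.1.1, trivial⟩
      have hHcont : ContinuousOn (fun p : ℝ × ℝ =>
          (a p.1 p.2 - a₀ * Real.exp (-(2*ε+4)*p.1)) * u p.1 p.2 * Real.exp (-(ε+1)*p.1)
          + η * Real.exp (3*p.1) * (1 + p.2^2)) (Set.Icc 0 T ×ˢ Set.Icc (-R) R) := by
        apply ContinuousOn.add
        · apply ContinuousOn.mul
          · exact ((ha_cont.mono hKsub).sub (Continuous.continuousOn (by fun_prop))).mul
              (hu_cont.mono hKsub)
          · exact Continuous.continuousOn (by fun_prop)
        · exact Continuous.continuousOn (by fun_prop)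
      obtain ⟨p₀, hp₀K, hp₀min⟩ := (isCompact_Icc.prod isCompact_Icc).exists_isMinOn
        ⟨(0,0), ⟨⟨le_rfl, hTnn⟩, ⟨neg_nonpos.mpr hRnn, hRnn⟩⟩⟩ hHcont
      rw [isMinOn_iff] at hp₀min
      obtain ⟨t₀, x₀⟩ := p₀
      dsimp only at hp₀min hp₀K
      obtain ⟨⟨ht₀0, ht₀T⟩, hx₀R⟩ := hp₀K
      dsimp only at ht₀0 ht₀T hx₀R
      -- the bad point lies in the compact set
      have hbadW := hWlb T hTnn xT
      have hE3T : (1:ℝ) ≤ Real.exp (3*T) := Real.one_le_exp (by linarith)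
      have hxT2 : 1 + xT^2 < a₀ / η := by
        rw [lt_div_iff₀ hη]
        have h0 : 0 ≤ η * (1+xT^2) := by positivity
        have h1 : η * (1+xT^2) * 1 ≤ η * (1+xT^2) * Real.exp (3*T) :=
          mul_le_mul_of_nonneg_left hE3T h0
        nlinarith [h1, hbad, hbadW]
      have hxTmem : xT ∈ Set.Icc (-R) R := by
        have habs : |xT| ≤ R := by
          rw [← Real.sqrt_sq_eq_abs, hR]
          exact Real.sqrt_le_sqrt (by nlinarith)
        exact abs_le.mp habs
      have hminneg : (a t₀ x₀ - a₀ * Real.exp (-(2*ε+4)*t₀)) * u t₀ x₀ * Real.exp (-(ε+1)*t₀)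
          + η * Real.exp (3*t₀) * (1 + x₀^2) < 0 := by
        have h := hp₀min (T, xT) ⟨⟨hTnn, le_rfl⟩, hxTmem⟩
        exact lt_of_le_of_lt h hbad
      have ht₀pos : 0 < t₀ := by
        rcases eq_or_lt_of_le ht₀0 with h0 | h
        · exfalso
          rw [← h0] at hminneg
          simp only [mul_zero, Real.exp_zero, mul_one, ha_init x₀] at hminneg
          nlinarith [sq_nonneg x₀]
        · exact h
      have hE3t₀ : (1:ℝ) ≤ Real.exp (3*t₀) := Real.one_le_exp (by linarith)
      -- global-in-x minimality at t₀
      have hminx : ∀ y,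
          (a t₀ x₀ - a₀ * Real.exp (-(2*ε+4)*t₀)) * u t₀ x₀ * Real.exp (-(ε+1)*t₀)
            + η * Real.exp (3*t₀) * (1 + x₀^2)
          ≤ (a t₀ y - a₀ * Real.exp (-(2*ε+4)*t₀)) * u t₀ y * Real.exp (-(ε+1)*t₀)
            + η * Real.exp (3*t₀) * (1 + y^2) := by
        intro y
        by_cases hy : y ∈ Set.Icc (-R) R
        · exact hp₀min (t₀, y) ⟨⟨ht₀0, ht₀T⟩, hy⟩
        · rw [Set.mem_Icc, not_and_or] at hy
          have hy2 : a₀ / η < y^2 := by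
            rw [← hR2]
            rcases hy with hy | hy <;> push_neg at hy <;> nlinarith [hy, hRpos]
          have hW := hWlb t₀ ht₀0 y
          have h1 : a₀ ≤ η * (1 + y^2) := by
            rw [div_lt_iff₀ hη] at hy2; nlinarith
          have h2 : η * (1 + y^2) ≤ η * Real.exp (3*t₀) * (1 + y^2) := by
            have h0 : 0 ≤ η * (1 + y^2) := by positivity
            nlinarith [mul_le_mul_of_nonneg_left hE3t₀ h0]
          linarith
      -- time minimality
      have hmint : ∀ s ∈ Set.Icc (0:ℝ) t₀,
          (a t₀ x₀ - a₀ * Real.exp (-(2*ε+4)*t₀)) * u t₀ x₀ * Real.exp (-(ε+1)*t₀)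
            + η * Real.exp (3*t₀) * (1 + x₀^2)
          ≤ (a s x₀ - a₀ * Real.exp (-(2*ε+4)*s)) * u s x₀ * Real.exp (-(ε+1)*s)
            + η * Real.exp (3*s) * (1 + x₀^2) :=
        fun s hs => hp₀min (s, x₀) ⟨⟨hs.1, le_trans hs.2 ht₀T⟩, hx₀R⟩
      -- regularity in x
      have hu2 := hu_reg_x t₀ ht₀pos
      have ha2 := ha_reg_x t₀ ht₀pos
      have hu2' : ContDiff ℝ (1+1) (u t₀) := by norm_num; exact hu2
      have ha2' : ContDiff ℝ (1+1) (a t₀) := by norm_num; exact ha2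
      obtain ⟨hud, -, hud1⟩ := contDiff_succ_iff_deriv.mp hu2'
      obtain ⟨had, -, had1⟩ := contDiff_succ_iff_deriv.mp ha2'
      have hudd : Differentiable ℝ (deriv (u t₀)) := hud1.differentiable one_ne_zero
      have hadd : Differentiable ℝ (deriv (a t₀)) := had1.differentiable one_ne_zero
      -- space derivatives
      have hfC2 : ContDiff ℝ 2 (fun y => (a t₀ y - a₀ * Real.exp (-(2*ε+4)*t₀)) * u t₀ y
          * Real.exp (-(ε+1)*t₀) + η * Real.exp (3*t₀) * (1 + y^2)) := by
        exact (((ha2.sub contDiff_const).mul hu2).mul contDiff_const).add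
          (contDiff_const.mul (contDiff_const.add (contDiff_id.pow 2)))
      have h2ndtest := aux_second_deriv_nonneg hfC2 hminx
      have hfd : ∀ y, HasDerivAt (fun y => (a t₀ y - a₀ * Real.exp (-(2*ε+4)*t₀)) * u t₀ y
          * Real.exp (-(ε+1)*t₀) + η * Real.exp (3*t₀) * (1 + y^2))
          ((deriv (a t₀) y * u t₀ y + (a t₀ y - a₀ * Real.exp (-(2*ε+4)*t₀)) * deriv (u t₀) y)
            * Real.exp (-(ε+1)*t₀) + η * Real.exp (3*t₀) * (2*y)) y := by
        intro y
        have h1 : HasDerivAt (fun z : ℝ => 1 + z^2) (2*y) y := by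
          simpa using (hasDerivAt_pow 2 y).const_add 1
        exact (((((had y).hasDerivAt).sub_const _).mul ((hud y).hasDerivAt)).mul_const _).add
          (h1.const_mul (η * Real.exp (3*t₀)))
      have hfd' : deriv (fun y => (a t₀ y - a₀ * Real.exp (-(2*ε+4)*t₀)) * u t₀ y
          * Real.exp (-(ε+1)*t₀) + η * Real.exp (3*t₀) * (1 + y^2))
          = fun y => (deriv (a t₀) y * u t₀ y
            + (a t₀ y - a₀ * Real.exp (-(2*ε+4)*t₀)) * deriv (u t₀) y)
            * Real.exp (-(ε+1)*t₀) + η * Real.exp (3*t₀) * (2*y) :=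
        funext fun y => (hfd y).deriv
      have hsec : HasDerivAt (deriv (fun y => (a t₀ y - a₀ * Real.exp (-(2*ε+4)*t₀)) * u t₀ y
          * Real.exp (-(ε+1)*t₀) + η * Real.exp (3*t₀) * (1 + y^2)))
          (((deriv (deriv (a t₀)) x₀ * u t₀ x₀ + deriv (a t₀) x₀ * deriv (u t₀) x₀)
            + (deriv (a t₀) x₀ * deriv (u t₀) x₀
              + (a t₀ x₀ - a₀ * Real.exp (-(2*ε+4)*t₀)) * deriv (deriv (u t₀)) x₀))
            * Real.exp (-(ε+1)*t₀) + η * Real.exp (3*t₀) * 2) x₀ := by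
        rw [hfd']
        have h2 : HasDerivAt (fun y : ℝ => 2*y) (2:ℝ) x₀ := by
          simpa using (hasDerivAt_id x₀).const_mul (2:ℝ)
        exact (((((hadd x₀).hasDerivAt).mul ((hud x₀).hasDerivAt)).add
          ((((had x₀).hasDerivAt).sub_const _).mul ((hudd x₀).hasDerivAt))).mul_const _).add
          (h2.const_mul (η * Real.exp (3*t₀)))
      have h2nd : 0 ≤ ((deriv (deriv (a t₀)) x₀ * u t₀ x₀ + deriv (a t₀) x₀ * deriv (u t₀) x₀)
            + (deriv (a t₀) x₀ * deriv (u t₀) x₀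
              + (a t₀ x₀ - a₀ * Real.exp (-(2*ε+4)*t₀)) * deriv (deriv (u t₀)) x₀))
            * Real.exp (-(ε+1)*t₀) + η * Real.exp (3*t₀) * 2 := hsec.deriv ▸ h2ndtest
      -- time derivative
      have hta : HasDerivAt (fun s => a s x₀) (deriv (fun s => a s x₀) t₀) t₀ :=
        ((ha_reg_t x₀).differentiableAt (Ioi_mem_nhds ht₀pos)).hasDerivAt
      have htu : HasDerivAt (fun s => u s x₀) (deriv (fun s => u s x₀) t₀) t₀ :=
        ((hu_reg_t x₀).differentiableAt (Ioi_mem_nhds ht₀pos)).hasDerivAt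
      have hce : HasDerivAt (fun s => Real.exp (-(2*ε+4)*s))
          (Real.exp (-(2*ε+4)*t₀) * -(2*ε+4)) t₀ := by
        have h := ((hasDerivAt_id t₀).const_mul (-(2*ε+4))).exp
        simpa using h
      have hEd : HasDerivAt (fun s => Real.exp (-(ε+1)*s))
          (Real.exp (-(ε+1)*t₀) * -(ε+1)) t₀ := by
        have h := ((hasDerivAt_id t₀).const_mul (-(ε+1))).exp
        simpa using h
      have hE3d : HasDerivAt (fun s => Real.exp (3*s)) (Real.exp (3*t₀) * 3) t₀ := by
        have h := ((hasDerivAt_id t₀).const_mul (3:ℝ)).exp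
        simpa using h
      have hφ : HasDerivAt (fun s => (a s x₀ - a₀ * Real.exp (-(2*ε+4)*s)) * u s x₀
            * Real.exp (-(ε+1)*s) + η * Real.exp (3*s) * (1 + x₀^2))
          ((((deriv (fun s => a s x₀) t₀ - a₀ * (Real.exp (-(2*ε+4)*t₀) * -(2*ε+4))) * u t₀ x₀
              + (a t₀ x₀ - a₀ * Real.exp (-(2*ε+4)*t₀)) * deriv (fun s => u s x₀) t₀)
              * Real.exp (-(ε+1)*t₀)
            + (a t₀ x₀ - a₀ * Real.exp (-(2*ε+4)*t₀)) * u t₀ x₀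
              * (Real.exp (-(ε+1)*t₀) * -(ε+1)))
            + η * (Real.exp (3*t₀) * 3) * (1 + x₀^2)) t₀ :=
        (((hta.sub (hce.const_mul a₀)).mul htu).mul hEd).add
          ((hE3d.const_mul η).mul_const (1 + x₀^2))
      have hDnonpos := aux_deriv_nonpos ht₀pos hφ hmint
      -- the PDEs at (t₀, x₀)
      have upos : 0 < u t₀ x₀ := (hu_bdd t₀ ht₀pos x₀).1
      have hule : u t₀ x₀ ≤ 1 := (hu_bdd t₀ ht₀pos x₀).2
      have hapos : 0 < a t₀ x₀ := (ha_bdd t₀ ht₀pos x₀).1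
      have hale : a t₀ x₀ ≤ a₀ := (ha_bdd t₀ ht₀pos x₀).2
      have hlog : deriv (fun y => Real.log (u t₀ y)) x₀ = deriv (u t₀) x₀ / u t₀ x₀ :=
        (((hud x₀).hasDerivAt).log (ne_of_gt upos)).deriv
      have hpdea := ha_pde t₀ ht₀pos x₀
      rw [hlog] at hpdea
      have hpdeu := hu_pde t₀ ht₀pos x₀
      -- sign information
      have hEpos : 0 < Real.exp (-(ε+1)*t₀) := Real.exp_pos _
      have hE3pos : 0 < Real.exp (3*t₀) := Real.exp_pos _
      have hC'pos : 0 < Real.exp (-(2*ε+4)*t₀) := Real.exp_pos _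
      have hWneg : (a t₀ x₀ - a₀ * Real.exp (-(2*ε+4)*t₀)) * u t₀ x₀ * Real.exp (-(ε+1)*t₀) < 0 := by
        have h1 : (1:ℝ) * (η * Real.exp (3*t₀)) ≤ (1 + x₀^2) * (η * Real.exp (3*t₀)) :=
          mul_le_mul_of_nonneg_right (by nlinarith [sq_nonneg x₀]) (mul_pos hη hE3pos).le
        nlinarith [h1, mul_pos hη hE3pos, hminneg]
      have hterm1 : 0 ≤ ((a t₀ x₀ - a₀ * Real.exp (-(2*ε+4)*t₀)) * u t₀ x₀ * Real.exp (-(ε+1)*t₀))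
          * ((-(ε*(1 - u t₀ x₀)) + (u t₀ x₀ - (a t₀ x₀)^2)*(1 - u t₀ x₀)) - (ε+1)) := by
        apply mul_nonneg_of_nonpos_of_nonpos hWneg.le
        nlinarith [sq_nonneg (a t₀ x₀), hule, upos, hε]
      have hterm2 : 0 < u t₀ x₀ * (a₀ * Real.exp (-(2*ε+4)*t₀))
          * ((2*ε+4) - (u t₀ x₀ - (a t₀ x₀)^2)*(1 - u t₀ x₀)
            + (-(ε*(1 - u t₀ x₀)) + (u t₀ x₀ - (a t₀ x₀)^2)*(1 - u t₀ x₀)))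
          * Real.exp (-(ε+1)*t₀) := by
        have hbr : 0 < (2*ε+4) - (u t₀ x₀ - (a t₀ x₀)^2)*(1 - u t₀ x₀)
            + (-(ε*(1 - u t₀ x₀)) + (u t₀ x₀ - (a t₀ x₀)^2)*(1 - u t₀ x₀)) := by
          nlinarith [hule, upos, hε]
        exact mul_pos (mul_pos (mul_pos upos (mul_pos ha₀p hC'pos)) hbr) hEpos
      have hE3ge : 3 * (η * Real.exp (3*t₀)) ≤ 3 * (η * Real.exp (3*t₀)) * (1 + x₀^2) := by
        have h1 : 3 * (η * Real.exp (3*t₀)) * 1 ≤ 3 * (η * Real.exp (3*t₀)) * (1 + x₀^2) :=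
          mul_le_mul_of_nonneg_left (by nlinarith [sq_nonneg x₀]) (by positivity)
        linarith [h1]
      -- the algebraic identity
      have huu0 : u t₀ x₀ ≠ 0 := ne_of_gt upos
      have key_id : (((deriv (fun s => a s x₀) t₀
              - a₀ * (Real.exp (-(2*ε+4)*t₀) * -(2*ε+4))) * u t₀ x₀
              + (a t₀ x₀ - a₀ * Real.exp (-(2*ε+4)*t₀)) * deriv (fun s => u s x₀) t₀)
              * Real.exp (-(ε+1)*t₀)
            + (a t₀ x₀ - a₀ * Real.exp (-(2*ε+4)*t₀)) * u t₀ x₀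
              * (Real.exp (-(ε+1)*t₀) * -(ε+1)))
            + η * (Real.exp (3*t₀) * 3) * (1 + x₀^2)
          = ((deriv (deriv (a t₀)) x₀ * u t₀ x₀ + deriv (a t₀) x₀ * deriv (u t₀) x₀)
              + (deriv (a t₀) x₀ * deriv (u t₀) x₀
                + (a t₀ x₀ - a₀ * Real.exp (-(2*ε+4)*t₀)) * deriv (deriv (u t₀)) x₀))
              * Real.exp (-(ε+1)*t₀)
            + ((a t₀ x₀ - a₀ * Real.exp (-(2*ε+4)*t₀)) * u t₀ x₀ * Real.exp (-(ε+1)*t₀))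
              * ((-(ε*(1 - u t₀ x₀)) + (u t₀ x₀ - (a t₀ x₀)^2)*(1 - u t₀ x₀)) - (ε+1))
            + u t₀ x₀ * (a₀ * Real.exp (-(2*ε+4)*t₀))
              * ((2*ε+4) - (u t₀ x₀ - (a t₀ x₀)^2)*(1 - u t₀ x₀)
                + (-(ε*(1 - u t₀ x₀)) + (u t₀ x₀ - (a t₀ x₀)^2)*(1 - u t₀ x₀)))
              * Real.exp (-(ε+1)*t₀)
            + 3 * (η * Real.exp (3*t₀)) * (1 + x₀^2) := by
        rw [hpdea, hpdeu]
        field_simp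
        ring
      have hDnonpos := aux_deriv_nonpos ht₀pos hφ hmint
      rw [key_id] at hDnonpos
      linarith [hDnonpos, h2nd, hterm1, hterm2, hE3ge, mul_pos hη hE3pos]
    -- let η → 0
    have hWnn : 0 ≤ (a T xT - a₀ * Real.exp (-(2*ε+4)*T)) * u T xT * Real.exp (-(ε+1)*T) := by
      by_contra hneg
      push_neg at hneg
      have hden : 0 < Real.exp (3*T) * (1 + xT^2) := by positivity
      have hnum : 0 < -((a T xT - a₀ * Real.exp (-(2*ε+4)*T)) * u T xT * Real.exp (-(ε+1)*T)) := by
        linarith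
      have hη' : 0 < -((a T xT - a₀ * Real.exp (-(2*ε+4)*T)) * u T xT * Real.exp (-(ε+1)*T))
          / (2 * (Real.exp (3*T) * (1 + xT^2))) := by positivity
      have hm := main _ hη'
      have heq : -((a T xT - a₀ * Real.exp (-(2*ε+4)*T)) * u T xT * Real.exp (-(ε+1)*T))
          / (2 * (Real.exp (3*T) * (1 + xT^2))) * Real.exp (3*T) * (1 + xT^2)
          = -((a T xT - a₀ * Real.exp (-(2*ε+4)*T)) * u T xT * Real.exp (-(ε+1)*T)) / 2 := by
        field_simp
      rw [heq] at hm
      linarith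
    have upos := (hu_bdd T hT xT).1
    have hEpos : 0 < Real.exp (-(ε+1)*T) := Real.exp_pos _
    nlinarith [hWnn, mul_pos upos hEpos]
  -- ### assemble the result
  refine ⟨ε + 2, by linarith, ε + 2, by linarith, fun t ht x => ?_⟩
  rcases eq_or_lt_of_le ht with h0 | hpos
  · rw [← h0]
    simp only [mul_zero, Real.exp_zero, mul_one, ha_init x]
    exact ⟨le_rfl, le_rfl⟩
  · constructor
    · have h := key t hpos x
      have harg : -(ε + 2 + (ε + 2)) * t = -(2*ε+4) * t := by ring
      rw [harg]
      exact h
    · have hle := (ha_bdd t hpos x).2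
      have h1 : (1:ℝ) ≤ Real.exp ((ε + 2 + (ε + 2)) * t) :=
        Real.one_le_exp (by nlinarith)
      nlinarith
end
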